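/- Let φ be a real number with |φ| > 1 and let (ε_t)_{t∈ℤ} be a subexponential sequence of real numbers. Then a sequence (x_t)_{t∈ℤ} satisfies x_t = φ x_{t-1} + ε_t for all t ∈ ℤ if and only if there exists v ∈ ℝ such that x_t = φ^t v − ∑_{k=1}^∞ φ^{-k} ε_{t+k} for all t ∈ ℤ. Moreover such v is unique and equals lim_{n→∞} φ^{-n} x_n. -/

import Mathlib

open Filter Topology

/-- A two-sided real sequence is subexponential. -/
def Subexp (y : ℤ → ℝ) : Prop :=
  ∀ r ∈ Set.Ioo (0 : ℝ) 1, Summable fun t : ℤ => r ^ t.natAbs * |y t|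

/-!
Set `S t = ∑_{k ≥ 0} φ^{-k-1} ε_{t+k+1}`; it converges because `ε` is subexponential and
`|φ|⁻¹ < 1`, and it satisfies `φ S_{t-1} = ε_t + S_t`. Hence `x` solves `x_t = φ x_{t-1} + ε_t`
exactly when `y = x + S` solves `y_t = φ y_{t-1}`, i.e. when `y_t = φ^t v` for some `v`, and then
`v = y_0`. Finally `φ^{-n} S_n = ∑_{m > n} φ^{-m} ε_m` is the tail of a series, so
`φ^{-n} x_n = v - φ^{-n} S_n → v`.
-/

theorem forall_eq_mul_sub_one_iff_exists_eq_zpow_mul {G₀ : Type*} [GroupWithZero G₀] {φ : G₀}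
    (hφ : φ ≠ 0) {y : ℤ → G₀} :
    (∀ t, y t = φ * y (t - 1)) ↔ ∃ v, ∀ t, y t = φ ^ t * v := by
  constructor
  · intro h
    refine ⟨y 0, fun t => ?_⟩
    induction t using Int.induction_on with
    | zero => simp
    | succ n ih => rw [h, add_sub_cancel_right, ih, ← mul_assoc, ← zpow_one_add₀ hφ, add_comm]
    | pred n ih =>
      rw [← mul_right_inj' hφ, ← h, ih, ← mul_assoc, ← zpow_one_add₀ hφ, add_sub_cancel]
  · rintro ⟨v, hv⟩ t
    rw [hv, hv, ← mul_assoc, ← zpow_one_add₀ hφ, add_sub_cancel]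

lemma zpow_neg_natCast_sub_one {K : Type*} [DivisionRing K] (φ : K) (k : ℕ) :
    φ ^ (-(k : ℤ) - 1) = φ⁻¹ ^ (k + 1) := by
  rw [show -(k : ℤ) - 1 = -((k + 1 : ℕ) : ℤ) by push_cast; ring, zpow_neg, zpow_natCast, inv_pow]

lemma Subexp.summable_pow_mul_abs_add {ε : ℤ → ℝ} (hε : Subexp ε) {r : ℝ}
    (hr : r ∈ Set.Ioo 0 1) (t : ℤ) : Summable fun k : ℕ => r ^ k * |ε (t + k)| := by
  have hshift : Summable fun k : ℕ => r ^ (t + k).natAbs * |ε (t + k)| :=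
    (hε r hr).comp_injective ((add_right_injective t).comp Nat.cast_injective)
  refine .of_nonneg_of_le (fun k => by have := hr.1; positivity) (fun k => ?_)
    (hshift.mul_left (r ^ t.natAbs)⁻¹)
  rw [← mul_assoc]
  gcongr
  rw [le_inv_mul_iff₀ (pow_pos hr.1 _), ← pow_add]
  exact pow_le_pow_of_le_one hr.1.le hr.2.le (by omega)

section FutureSum

variable {φ : ℝ} {ε : ℤ → ℝ}

noncomputable def futureSum (φ : ℝ) (ε : ℤ → ℝ) (t : ℤ) : ℝ :=
  ∑' k : ℕ, φ ^ (-(k : ℤ) - 1) * ε (t + k + 1)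

lemma futureSum_eq (φ : ℝ) (ε : ℤ → ℝ) (t : ℤ) :
    futureSum φ ε t = ∑' k : ℕ, φ⁻¹ ^ (k + 1) * ε (t + k + 1) := by
  simp only [futureSum, zpow_neg_natCast_sub_one]

lemma summable_inv_pow_mul_add (hφ : 1 < |φ|) (hε : Subexp ε) (t : ℤ) :
    Summable fun k : ℕ => φ⁻¹ ^ k * ε (t + k) := by
  have hr : |φ|⁻¹ ∈ Set.Ioo 0 1 := ⟨by positivity, inv_lt_one_of_one_lt₀ hφ⟩
  refine .of_norm ((hε.summable_pow_mul_abs_add hr t).congr fun k => ?_)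
  rw [Real.norm_eq_abs, abs_mul, abs_pow, abs_inv]

lemma mul_futureSum_sub_one (hφ : 1 < |φ|) (hε : Subexp ε) (t : ℤ) :
    φ * futureSum φ ε (t - 1) = ε t + futureSum φ ε t := by
  have hφ0 : φ ≠ 0 := by rintro rfl; norm_num at hφ
  have hsplit := (summable_inv_pow_mul_add hφ hε t).tsum_eq_zero_add
  have hreindex : ∀ k : ℕ, t - 1 + k + 1 = t + k := fun k => by ring
  push_cast at hsplit
  rw [futureSum_eq, futureSum_eq]
  simp only [hreindex, hsplit, pow_zero, one_mul, add_zero, pow_succ', mul_assoc,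
    tsum_mul_left, ← add_assoc, mul_add, mul_inv_cancel_left₀ hφ0]

lemma recurrence_iff_add_futureSum (hφ : 1 < |φ|) (hε : Subexp ε) (x : ℤ → ℝ) (t : ℤ) :
    x t = φ * x (t - 1) + ε t ↔
      x t + futureSum φ ε t = φ * (x (t - 1) + futureSum φ ε (t - 1)) := by
  rw [mul_add, mul_futureSum_sub_one hφ hε]
  constructor <;> intro h <;> linarith

/-- `φ^{-n} S_n` is the tail `∑_{m > n} φ^{-m} ε_m`; this needs no summability, because `∑'` of a
non-summable series is `0`. -/
lemma tendsto_zpow_neg_mul_futureSum (φ : ℝ) (ε : ℤ → ℝ) :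
    Tendsto (fun n : ℕ => φ ^ (-(n : ℤ)) * futureSum φ ε n) atTop (𝓝 0) := by
  have htail := (tendsto_sum_nat_add fun m : ℕ => φ⁻¹ ^ m * ε m).comp (tendsto_add_atTop_nat 1)
  refine htail.congr fun n => ?_
  rw [Function.comp_apply, futureSum_eq, ← tsum_mul_left]
  refine tsum_congr fun k => ?_
  rw [zpow_neg, zpow_natCast, ← inv_pow, ← mul_assoc, ← pow_add]
  push_cast
  ring_nf

end FutureSum

theorem stmt_3 (φ : ℝ) (hφ : 1 < |φ|)
    (ε : ℤ → ℝ) (hε : Subexp ε) (x : ℤ → ℝ) :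
    ((∀ t : ℤ, x t = φ * x (t - 1) + ε t) ↔
      ∃ v : ℝ, ∀ t : ℤ, x t = φ ^ t * v - ∑' k : ℕ, φ ^ (-(k : ℤ) - 1) * ε (t + k + 1)) ∧
    ((∀ t : ℤ, x t = φ * x (t - 1) + ε t) →
      ∃! v : ℝ, (∀ t : ℤ, x t = φ ^ t * v - ∑' k : ℕ, φ ^ (-(k : ℤ) - 1) * ε (t + k + 1)) ∧
        Tendsto (fun n : ℕ => φ ^ (-(n : ℤ)) * x n) atTop (𝓝 v)) := by
  have hφ0 : φ ≠ 0 := by rintro rfl; norm_num at hφ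
  have hsolution : (∀ t : ℤ, x t = φ * x (t - 1) + ε t) ↔
      ∃ v : ℝ, ∀ t : ℤ, x t = φ ^ t * v - futureSum φ ε t := by
    simp only [forall_congr' (recurrence_iff_add_futureSum hφ hε x), eq_sub_iff_add_eq]
    exact forall_eq_mul_sub_one_iff_exists_eq_zpow_mul hφ0
  refine ⟨hsolution, fun hrec => ?_⟩
  obtain ⟨v, hv⟩ := hsolution.mp hrec
  have hscaled : ∀ n : ℕ, φ ^ (-(n : ℤ)) * x n = v - φ ^ (-(n : ℤ)) * futureSum φ ε n := by
    intro n
    rw [hv, mul_sub, ← mul_assoc, ← zpow_add₀ hφ0, neg_add_cancel, zpow_zero, one_mul]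
  have hlimit : Tendsto (fun n : ℕ => φ ^ (-(n : ℤ)) * x n) atTop (𝓝 v) := by
    simp only [hscaled]
    simpa using tendsto_const_nhds.sub (tendsto_zpow_neg_mul_futureSum φ ε)
  refine ⟨v, ⟨hv, hlimit⟩, fun w ⟨hw, _⟩ => ?_⟩
  have hzero := (hw 0).symm.trans (hv 0)
  rw [zpow_zero, one_mul, one_mul] at hzero
  exact sub_left_inj.mp hzero
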